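/- arXiv:2106.03967 — 3 statements merged into one kernel-verified Lean document; each statement's English description precedes it below -/
import Mathlib

section
/- Let f(r) = r(1+r^2)^{-1/4} and h(r) = (1+r^2)^{-α} with α > 0, and let p ≥ 2 be an integer. For all r > 0, the quantity -h''(r)/h(r) - (p-1) f''(r)/f(r) is strictly greater than (r^2/(1+r^2)^2) * [(p-1)/4 - (2α + 4α^2)]. -/
/-!
Both warping functions are built from `g = (1 + r²)^q`, whose logarithmic derivative
`2qr/(1 + r²)` is rational. Hence `g''/g = 2q/(1 + r²) + 4q(q-1)r²/(1 + r²)²` and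
`(r g)''/(r g) = 6q/(1 + r²) + 4q(q-1)r²/(1 + r²)²`. Taking `q = -α` for `h` and `q = -1/4`
for `f`, the two sides of the inequality differ by exactly `(2α + 3(p-1)/2)/(1 + r²)²`.
-/

noncomputable def f (r : ℝ) : ℝ := r * (1 + r ^ 2) ^ (-(1 / 4 : ℝ))

noncomputable def h (α : ℝ) (r : ℝ) : ℝ := (1 + r ^ 2) ^ (-α)

lemma hasDerivAt_one_add_sq_rpow (q r : ℝ) :
    HasDerivAt (fun x : ℝ => (1 + x ^ 2) ^ q) (2 * q * r / (1 + r ^ 2) * (1 + r ^ 2) ^ q) r := by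
  have hpos : 0 < 1 + r ^ 2 := by positivity
  have hd := ((hasDerivAt_pow 2 r).const_add 1).rpow_const (p := q) (Or.inl hpos.ne')
  convert hd using 1
  rw [Real.rpow_sub_one hpos.ne']
  push_cast
  ring

lemma deriv_one_add_sq_rpow (q : ℝ) :
    deriv (fun x : ℝ => (1 + x ^ 2) ^ q) = fun x => 2 * q * x / (1 + x ^ 2) * (1 + x ^ 2) ^ q :=
  funext fun r => (hasDerivAt_one_add_sq_rpow q r).deriv

lemma hasDerivAt_deriv_one_add_sq_rpow (q r : ℝ) :
    HasDerivAt (deriv fun x : ℝ => (1 + x ^ 2) ^ q)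
      ((2 * q / (1 + r ^ 2) + 4 * q * (q - 1) * r ^ 2 / (1 + r ^ 2) ^ 2) * (1 + r ^ 2) ^ q) r := by
  have hA : 1 + r ^ 2 ≠ 0 := by positivity
  have hden : HasDerivAt (fun x : ℝ => 1 + x ^ 2) (2 * r) r := by
    simpa using (hasDerivAt_pow 2 r).const_add 1
  have hquot : HasDerivAt (fun x : ℝ => 2 * q * x / (1 + x ^ 2))
      ((2 * q * (1 + r ^ 2) - 2 * q * r * (2 * r)) / (1 + r ^ 2) ^ 2) r := by
    simpa using ((hasDerivAt_id' r).const_mul (2 * q)).fun_div hden hA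
  rw [deriv_one_add_sq_rpow]
  refine (hquot.fun_mul (hasDerivAt_one_add_sq_rpow q r)).congr_deriv ?_
  field_simp
  ring

lemma deriv_deriv_one_add_sq_rpow_div (q r : ℝ) :
    deriv (deriv fun x : ℝ => (1 + x ^ 2) ^ q) r / (1 + r ^ 2) ^ q =
      2 * q / (1 + r ^ 2) + 4 * q * (q - 1) * r ^ 2 / (1 + r ^ 2) ^ 2 := by
  rw [(hasDerivAt_deriv_one_add_sq_rpow q r).deriv,
    mul_div_cancel_right₀ _ (Real.rpow_pos_of_pos (by positivity) q).ne']

lemma deriv_deriv_id_mul {g : ℝ → ℝ} {r : ℝ} (hg : Differentiable ℝ g)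
    (hg' : DifferentiableAt ℝ (deriv g) r) :
    deriv (deriv fun x => x * g x) r = 2 * deriv g r + r * deriv (deriv g) r := by
  have hd : deriv (fun x => x * g x) = fun x => g x + x * deriv g x := by
    funext x
    simpa using ((hasDerivAt_id' x).fun_mul (hg x).hasDerivAt).deriv
  rw [hd, ((hg r).hasDerivAt.fun_add ((hasDerivAt_id' r).fun_mul hg'.hasDerivAt)).deriv]
  ring

lemma deriv_deriv_id_mul_one_add_sq_rpow_div (q : ℝ) {r : ℝ} (hr : r ≠ 0) :
    deriv (deriv fun x : ℝ => x * (1 + x ^ 2) ^ q) r / (r * (1 + r ^ 2) ^ q) =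
      6 * q / (1 + r ^ 2) + 4 * q * (q - 1) * r ^ 2 / (1 + r ^ 2) ^ 2 := by
  have hA : 0 < 1 + r ^ 2 := by positivity
  have hg : Differentiable ℝ fun x : ℝ => (1 + x ^ 2) ^ q := fun x =>
    (hasDerivAt_one_add_sq_rpow q x).differentiableAt
  rw [deriv_deriv_id_mul hg (hasDerivAt_deriv_one_add_sq_rpow q r).differentiableAt,
    (hasDerivAt_deriv_one_add_sq_rpow q r).deriv, deriv_one_add_sq_rpow]
  field_simp [(Real.rpow_pos_of_pos hA q).ne']
  ring

theorem stmt_3 (α : ℝ) (hα : 0 < α) (p : ℕ) (hp : 2 ≤ p) :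
    ∀ r : ℝ, 0 < r →
      (r ^ 2 / (1 + r ^ 2) ^ 2) * (((p : ℝ) - 1) / 4 - (2 * α + 4 * α ^ 2)) <
        -(deriv (deriv (h α)) r) / h α r - ((p : ℝ) - 1) * (deriv (deriv f) r) / f r := by
  intro r hr
  have hh : deriv (deriv (h α)) r / h α r =
      2 * -α / (1 + r ^ 2) + 4 * -α * (-α - 1) * r ^ 2 / (1 + r ^ 2) ^ 2 :=
    deriv_deriv_one_add_sq_rpow_div (-α) r
  have hf : deriv (deriv f) r / f r =
      6 * -(1 / 4) / (1 + r ^ 2) + 4 * -(1 / 4) * (-(1 / 4) - 1) * r ^ 2 / (1 + r ^ 2) ^ 2 :=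
    deriv_deriv_id_mul_one_add_sq_rpow_div _ hr.ne'
  have hp' : (2 : ℝ) ≤ p := by exact_mod_cast hp
  have hgap : 0 < (2 * α + 3 / 2 * ((p : ℝ) - 1)) / (1 + r ^ 2) ^ 2 :=
    div_pos (by linarith) (by positivity)
  rw [neg_div, mul_div_assoc, hh, hf]
  have gap_eq : -(2 * -α / (1 + r ^ 2) + 4 * -α * (-α - 1) * r ^ 2 / (1 + r ^ 2) ^ 2) -
      ((p : ℝ) - 1) * (6 * -(1 / 4) / (1 + r ^ 2) +
        4 * -(1 / 4) * (-(1 / 4) - 1) * r ^ 2 / (1 + r ^ 2) ^ 2) -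
      r ^ 2 / (1 + r ^ 2) ^ 2 * (((p : ℝ) - 1) / 4 - (2 * α + 4 * α ^ 2)) =
      (2 * α + 3 / 2 * ((p : ℝ) - 1)) / (1 + r ^ 2) ^ 2 := by
    field_simp
    ring
  linarith
end

section
/- Let α > 0 and C₁ = 2 · 9^{-1/(2α)}. For every real b ≠ 0 and every sequence of positive integers l_i → ∞ and scales r_i → ∞ with lim r_i^{-1} d(γ^{l_i} p̃, p̃) = 1, if the distance estimate C l^{1/(1+2α)} - 2 ≤ d(γ^l p̃, p̃) ≤ 9 l^{1/(1+2α)} holds for all l ≥ 9^{1+1/(2α)}, then there exist constants C₁', C₂' > 0 depending only on α such that C₁'|b|^{1/(1+2α)} ≤ lim inf_i r_i^{-1} d(γ^{⌊b l_i⌋} p̃, p̃) ≤ lim sup_i r_i^{-1} d(γ^{⌊b l_i⌋} p̃, p̃) ≤ C₂'|b|^{1/(1+2α)}. -/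
/-! With `D n = d(γⁿ p̃, p̃)`, which is even in `n` because `γ` acts by isometries, write
`m = |⌊b l⌋|`, so that `m / l → |b|`. The two-sided power law at the scales `m` and `l`,
combined through `m^β = (m / l)^β l^β`, squeezes `D m` between constant multiples of
`(m / l)^β D l` up to additive errors; dividing by `r`, with `D l / r → 1` and `r → ∞`,
gives the bounds on the liminf and limsup, with `C₁' = c / 9` and `C₂' = 9 / c` for
`c = 2 · 9^(-1/(2α))`. -/

open Filter Topology

lemma dist_zpow_apply_self_eq_natAbs {N : Type*} [PseudoMetricSpace N] (γ : N ≃ᵢ N) (p : N)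
    (m : ℤ) : dist ((γ ^ m) p) p = dist ((γ ^ (m.natAbs : ℤ)) p) p := by
  obtain ⟨k, rfl | rfl⟩ := Int.eq_nat_or_neg m
  · rfl
  · rw [Int.natAbs_neg, Int.natAbs_natCast]
    calc dist ((γ ^ (-(k : ℤ))) p) p
        = dist ((γ ^ (k : ℤ)) ((γ ^ (-(k : ℤ))) p)) ((γ ^ (k : ℤ)) p) :=
          ((γ ^ (k : ℤ)).dist_eq _ _).symm
      _ = dist p ((γ ^ (k : ℤ)) p) := by
          rw [← IsometryEquiv.mul_apply, ← zpow_add, add_neg_cancel, zpow_zero]; rfl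
      _ = dist ((γ ^ (k : ℤ)) p) p := dist_comm _ _

lemma tendsto_natAbs_floor_mul_div_atTop (b : ℝ) :
    Tendsto (fun x : ℝ => (⌊b * x⌋.natAbs : ℝ) / x) atTop (𝓝 |b|) := by
  have hfloor : Tendsto (fun x : ℝ => (⌊b * x⌋ : ℝ) / x) atTop (𝓝 b) := by
    have hlower : Tendsto (fun x : ℝ => b - x⁻¹) atTop (𝓝 b) := by
      simpa using tendsto_const_nhds.sub (tendsto_inv_atTop_zero (𝕜 := ℝ))
    refine tendsto_of_tendsto_of_tendsto_of_le_of_le' hlower tendsto_const_nhds ?_ ?_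
    all_goals
      filter_upwards [eventually_gt_atTop 0] with x hx
    · rw [le_div_iff₀ hx, sub_mul, inv_mul_cancel₀ hx.ne']
      linarith [Int.sub_one_lt_floor (b * x)]
    · rw [div_le_iff₀ hx]
      exact Int.floor_le _
  refine hfloor.abs.congr' ?_
  filter_upwards [eventually_gt_atTop 0] with x hx
  rw [abs_div, abs_of_pos hx, Nat.cast_natAbs, Int.cast_abs]

lemma tendsto_atTop_of_tendsto_div_of_pos {ι : Type*} {F : Filter ι} {x y : ι → ℝ} {a : ℝ}
    (ha : 0 < a) (hy : Tendsto y F atTop) (hxy : Tendsto (fun i => x i / y i) F (𝓝 a)) :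
    Tendsto x F atTop :=
  (hxy.pos_mul_atTop ha hy).congr' <|
    (hy.eventually_ne_atTop 0).mono fun _ hi => div_mul_cancel₀ _ hi

lemma le_liminf_and_limsup_le_of_squeeze {ι : Type*} {F : Filter ι} [F.NeBot] {f g h : ι → ℝ}
    {A B : ℝ} (hh : Tendsto h F (𝓝 A)) (hg : Tendsto g F (𝓝 B)) (hhf : h ≤ᶠ[F] f)
    (hfg : f ≤ᶠ[F] g) : A ≤ liminf f F ∧ limsup f F ≤ B := by
  have hbddAbove : IsBoundedUnder (· ≤ ·) F f := hg.isBoundedUnder_le.mono_le hfg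
  have hbddBelow : IsBoundedUnder (· ≥ ·) F f := hh.isBoundedUnder_ge.mono_ge hhf
  exact ⟨hh.liminf_eq ▸
      liminf_le_liminf hhf hh.isBoundedUnder_ge hbddAbove.isCoboundedUnder_ge,
    hg.limsup_eq ▸ limsup_le_limsup hfg hbddBelow.isCoboundedUnder_le hg.isBoundedUnder_le⟩

section PowerLaw

variable {x y Dx Dy β c C K : ℝ}

lemma rpow_eq_rpow_div_mul_rpow (hx : 0 ≤ x) (hy : 0 < y) : x ^ β = (x / y) ^ β * y ^ β := by
  rw [Real.div_rpow hx hy.le, div_mul_cancel₀ _ (Real.rpow_pos_of_pos hy β).ne']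

lemma powerLaw_transfer_upper (hx : 0 ≤ x) (hy : 0 < y) (hc : 0 < c) (hC : 0 ≤ C)
    (hDx : Dx ≤ C * x ^ β + K) (hDy : c * y ^ β - K ≤ Dy) :
    Dx ≤ C / c * (x / y) ^ β * (Dy + K) + K := by
  have hy' : y ^ β ≤ (Dy + K) / c := by rw [le_div_iff₀ hc]; linarith
  calc Dx ≤ C * ((x / y) ^ β * y ^ β) + K := by rwa [← rpow_eq_rpow_div_mul_rpow hx hy]
    _ ≤ C * ((x / y) ^ β * ((Dy + K) / c)) + K := by gcongr
    _ = C / c * (x / y) ^ β * (Dy + K) + K := by ring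

lemma powerLaw_transfer_lower (hx : 0 ≤ x) (hy : 0 < y) (hc : 0 ≤ c) (hC : 0 < C)
    (hDx : c * x ^ β - K ≤ Dx) (hDy : Dy ≤ C * y ^ β + K) :
    c / C * (x / y) ^ β * (Dy - K) - K ≤ Dx := by
  have hy' : (Dy - K) / C ≤ y ^ β := by rw [div_le_iff₀ hC]; linarith
  calc c / C * (x / y) ^ β * (Dy - K) - K = c * ((x / y) ^ β * ((Dy - K) / C)) - K := by ring
    _ ≤ c * ((x / y) ^ β * y ^ β) - K := by gcongr
    _ ≤ Dx := by rwa [← rpow_eq_rpow_div_mul_rpow hx hy]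

end PowerLaw

theorem le_liminf_and_limsup_le_of_powerLaw {ι : Type*} {F : Filter ι} [F.NeBot] {D : ℕ → ℝ}
    {β c C K T a : ℝ} {m l : ι → ℕ} {r : ι → ℝ} (hβ : 0 ≤ β) (hc : 0 < c) (hC : 0 < C)
    (ha : 0 < a)
    (hD : ∀ n : ℕ, T ≤ n → c * (n : ℝ) ^ β - K ≤ D n ∧ D n ≤ C * (n : ℝ) ^ β + K)
    (hl : Tendsto (fun i => (l i : ℝ)) F atTop)
    (hml : Tendsto (fun i => (m i : ℝ) / l i) F (𝓝 a)) (hr : Tendsto r F atTop)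
    (hlim : Tendsto (fun i => (r i)⁻¹ * D (l i)) F (𝓝 1)) :
    c / C * a ^ β ≤ liminf (fun i => (r i)⁻¹ * D (m i)) F ∧
      limsup (fun i => (r i)⁻¹ * D (m i)) F ≤ C / c * a ^ β := by
  have hm := tendsto_atTop_of_tendsto_div_of_pos ha hl hml
  have hrinv : Tendsto (fun i => (r i)⁻¹) F (𝓝 0) := hr.inv_tendsto_atTop
  set ρ : ι → ℝ := fun i => ((m i : ℝ) / l i) ^ β
  have hρ : Tendsto ρ F (𝓝 (a ^ β)) := hml.rpow_const (Or.inr hβ)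
  have hbig : ∀ᶠ i in F, 0 < r i ∧ 0 < (l i : ℝ) ∧ T ≤ l i ∧ T ≤ m i :=
    (hr.eventually_gt_atTop 0).and <| (hl.eventually_gt_atTop 0).and <|
      (hl.eventually_ge_atTop T).and (hm.eventually_ge_atTop T)
  refine le_liminf_and_limsup_le_of_squeeze
    (h := fun i => c / C * ρ i * ((r i)⁻¹ * D (l i)) - K * (r i)⁻¹ * (c / C * ρ i + 1))
    (g := fun i => C / c * ρ i * ((r i)⁻¹ * D (l i)) + K * (r i)⁻¹ * (C / c * ρ i + 1))
    ?_ ?_ ?_ ?_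
  · simpa using ((tendsto_const_nhds.mul hρ).mul hlim).sub
      ((tendsto_const_nhds.mul hrinv).mul ((tendsto_const_nhds.mul hρ).add_const 1))
  · simpa using ((tendsto_const_nhds.mul hρ).mul hlim).add
      ((tendsto_const_nhds.mul hrinv).mul ((tendsto_const_nhds.mul hρ).add_const 1))
  · filter_upwards [hbig] with i ⟨hri, hl0, hlT, hmT⟩
    have key : c / C * ρ i * (D (l i) - K) - K ≤ D (m i) :=
      powerLaw_transfer_lower (Nat.cast_nonneg _) hl0 hc.le hC (hD _ hmT).1 (hD _ hlT).2
    calc _ = (r i)⁻¹ * (c / C * ρ i * (D (l i) - K) - K) := by ring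
      _ ≤ (r i)⁻¹ * D (m i) := by gcongr
  · filter_upwards [hbig] with i ⟨hri, hl0, hlT, hmT⟩
    have key : D (m i) ≤ C / c * ρ i * (D (l i) + K) + K :=
      powerLaw_transfer_upper (Nat.cast_nonneg _) hl0 hc hC.le (hD _ hmT).2 (hD _ hlT).1
    calc (r i)⁻¹ * D (m i) ≤ (r i)⁻¹ * (C / c * ρ i * (D (l i) + K) + K) := by gcongr
      _ = _ := by ring

theorem stmt_14 (α : ℝ) (hα : 0 < α) (N : Type*) [MetricSpace N]
    (γ : N ≃ᵢ N) (p : N)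
    (hbounds : ∀ l : ℕ, (9 : ℝ) ^ (1 + 1 / (2 * α)) ≤ (l : ℝ) →
      2 * (9 : ℝ) ^ (-(1 / (2 * α))) * (l : ℝ) ^ (1 / (1 + 2 * α)) - 2
          ≤ dist ((γ ^ (l : ℤ)) p) p ∧
        dist ((γ ^ (l : ℤ)) p) p ≤ 9 * (l : ℝ) ^ (1 / (1 + 2 * α)))
    (b : ℝ) (hb : b ≠ 0) (l : ℕ → ℕ) (r : ℕ → ℝ)
    (hl : Tendsto (fun i => (l i : ℝ)) atTop atTop)
    (hr : Tendsto r atTop atTop)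
    (hlim : Tendsto (fun i => (r i)⁻¹ * dist ((γ ^ (l i : ℤ)) p) p) atTop (nhds 1)) :
    ∃ C₁' C₂' : ℝ, 0 < C₁' ∧ 0 < C₂' ∧
      C₁' * |b| ^ (1 / (1 + 2 * α))
        ≤ liminf (fun i => (r i)⁻¹ * dist ((γ ^ ⌊b * (l i : ℝ)⌋) p) p) atTop ∧
      limsup (fun i => (r i)⁻¹ * dist ((γ ^ ⌊b * (l i : ℝ)⌋) p) p) atTop
        ≤ C₂' * |b| ^ (1 / (1 + 2 * α)) := by
  set c : ℝ := 2 * (9 : ℝ) ^ (-(1 / (2 * α)))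
  have hc : 0 < c := by positivity
  have hβ : 0 ≤ 1 / (1 + 2 * α) := by positivity
  have hD (n : ℕ) (hn : (9 : ℝ) ^ (1 + 1 / (2 * α)) ≤ n) :=
    (hbounds n hn).imp_right fun h => h.trans (le_add_of_nonneg_right zero_le_two)
  have hfloor : (fun i => (r i)⁻¹ * dist ((γ ^ ⌊b * (l i : ℝ)⌋) p) p) =
      fun i => (r i)⁻¹ * dist ((γ ^ (⌊b * (l i : ℝ)⌋.natAbs : ℤ)) p) p :=
    funext fun i => by rw [dist_zpow_apply_self_eq_natAbs]
  obtain ⟨hlower, hupper⟩ := le_liminf_and_limsup_le_of_powerLaw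
    (D := fun n => dist ((γ ^ (n : ℤ)) p) p) hβ hc (by norm_num : (0 : ℝ) < 9)
    (abs_pos.2 hb) hD hl ((tendsto_natAbs_floor_mul_div_atTop b).comp hl) hr hlim
  exact ⟨c / 9, 9 / c, by positivity, by positivity, hfloor ▸ hlower, hfloor ▸ hupper⟩
end

section
/- In the flat product cylinder W = [0, R] × S^1_r (circle of circumference 2πr with product metric), any closed rectifiable loop with winding number l ∈ ℤ around the S^1 factor that intersects both boundary components {a} × S^1_r and {a + d} × S^1_r (where [a, a+d] ⊆ [0,R]) has length at least 2[d^2 + l^2 π^2 r^2 · (2π)^{-2} · (2π)^2]^{1/2} = 2√(d² + l²π²r²). -/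
/-!
The length of `c` is at least the length of the polygon `c 0, c s, c t, c 1`, where `s ≤ t` are
the times at which the loop touches the two boundary circles. Flipping the horizontal component of
each of the three chords to be nonnegative does not change its length, and by Minkowski's
inequality the sum of the three lengths is at least the length of the sum of the flipped chords.
That sum has horizontal part at least `2d` (the loop goes out to distance `d` and comes back) and
vertical part `l · 2πr`, the winding displacement.
-/

open Real Set

theorem eVariationOn.edist_add_edist_add_edist_le {α E : Type*} [LinearOrder α]
    [PseudoEMetricSpace E] (f : α → E) {a b c d : α} (hab : a ≤ b) (hbc : b ≤ c) (hcd : c ≤ d) :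
    edist (f a) (f b) + edist (f b) (f c) + edist (f c) (f d) ≤ eVariationOn f (Icc a d) := by
  have split {x y z : α} (hxy : x ≤ y) (hyz : y ≤ z) :
      eVariationOn f (Icc x y) + eVariationOn f (Icc y z) = eVariationOn f (Icc x z) := by
    simpa using eVariationOn.Icc_add_Icc f (s := univ) hxy hyz (mem_univ y)
  rw [← split (hab.trans hbc) hcd, ← split hab hbc]
  gcongr <;> exact eVariationOn.edist_le f (by simp [*]) (by simp [*])

theorem Real.sqrt_sq_sum_abs_add_sq_sum_le {ι : Type*} (s : Finset ι) (x y : ι → ℝ) :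
    √((∑ i ∈ s, |x i|) ^ 2 + (∑ i ∈ s, y i) ^ 2) ≤ ∑ i ∈ s, √(x i ^ 2 + y i ^ 2) := by
  have hnorm (u v : ℝ) : ‖(⟨u, v⟩ : ℂ)‖ = √(u ^ 2 + v ^ 2) := by
    rw [Complex.norm_def, Complex.normSq_mk]
    ring_nf
  simpa [hnorm, Complex.re_sum, Complex.im_sum] using
    norm_sum_le s fun i => (⟨|x i|, y i⟩ : ℂ)

theorem EuclideanSpace.dist_eq_sqrt_fin_two (p q : EuclideanSpace ℝ (Fin 2)) :
    dist p q = √((p 0 - q 0) ^ 2 + (p 1 - q 1) ^ 2) := by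
  rw [EuclideanSpace.dist_eq, Fin.sum_univ_two, Real.dist_eq, Real.dist_eq, sq_abs, sq_abs]

theorem EuclideanSpace.sqrt_sq_add_sq_le_dist_add_dist_add_dist
    {p₀ p₁ p₂ p₃ : EuclideanSpace ℝ (Fin 2)} {d : ℝ} (hd : 0 ≤ d) (hd₁₂ : d ≤ |p₂ 0 - p₁ 0|)
    (hp : p₃ 0 = p₀ 0) :
    √((2 * d) ^ 2 + (p₃ 1 - p₀ 1) ^ 2) ≤ dist p₀ p₁ + dist p₁ p₂ + dist p₂ p₃ := by
  have hx : 2 * d ≤ |p₁ 0 - p₀ 0| + |p₂ 0 - p₁ 0| + |p₃ 0 - p₂ 0| := by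
    rw [hp]
    linarith [abs_sub_le (p₂ 0) (p₀ 0) (p₁ 0), abs_sub_comm (p₁ 0) (p₀ 0),
      abs_sub_comm (p₀ 0) (p₂ 0)]
  have hy : p₃ 1 - p₀ 1 = (p₁ 1 - p₀ 1) + (p₂ 1 - p₁ 1) + (p₃ 1 - p₂ 1) := by ring
  calc √((2 * d) ^ 2 + (p₃ 1 - p₀ 1) ^ 2)
      ≤ √((|p₁ 0 - p₀ 0| + |p₂ 0 - p₁ 0| + |p₃ 0 - p₂ 0|) ^ 2 + (p₃ 1 - p₀ 1) ^ 2) := by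
        gcongr
    _ ≤ dist p₀ p₁ + dist p₁ p₂ + dist p₂ p₃ := by
        simpa [Fin.sum_univ_three, EuclideanSpace.dist_eq_sqrt_fin_two, ← hy, sub_sq_comm]
          using Real.sqrt_sq_sum_abs_add_sq_sum_le Finset.univ
            ![p₁ 0 - p₀ 0, p₂ 0 - p₁ 0, p₃ 0 - p₂ 0] ![p₁ 1 - p₀ 1, p₂ 1 - p₁ 1, p₃ 1 - p₂ 1]

theorem stmt_17_general (r a d : ℝ) (hd : 0 ≤ d)
    (l : ℤ) (c : ℝ → EuclideanSpace ℝ (Fin 2))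
    (hclosed₀ : c 1 0 = c 0 0)
    (hwind : c 1 1 = c 0 1 + (l : ℝ) * (2 * π * r))
    (htouch₁ : ∃ t₁ ∈ Set.Icc (0 : ℝ) 1, c t₁ 0 = a)
    (htouch₂ : ∃ t₂ ∈ Set.Icc (0 : ℝ) 1, c t₂ 0 = a + d) :
    ENNReal.ofReal (2 * Real.sqrt (d ^ 2 + (l : ℝ) ^ 2 * π ^ 2 * r ^ 2))
      ≤ eVariationOn c (Set.Icc 0 1) := by
  have hbound : 2 * √(d ^ 2 + (l : ℝ) ^ 2 * π ^ 2 * r ^ 2)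
      = √((2 * d) ^ 2 + (c 1 1 - c 0 1) ^ 2) := by
    rw [hwind, add_sub_cancel_left, ← abs_two, ← sqrt_sq_eq_abs, ← sqrt_mul (sq_nonneg _)]
    ring_nf
  have key {s t : ℝ} (hs : s ∈ Icc 0 1) (ht : t ∈ Icc 0 1) (hst : s ≤ t)
      (hdst : d ≤ |c t 0 - c s 0|) :
      ENNReal.ofReal (2 * √(d ^ 2 + (l : ℝ) ^ 2 * π ^ 2 * r ^ 2)) ≤ eVariationOn c (Icc 0 1) :=
    calc ENNReal.ofReal (2 * √(d ^ 2 + (l : ℝ) ^ 2 * π ^ 2 * r ^ 2))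
        ≤ ENNReal.ofReal (dist (c 0) (c s) + dist (c s) (c t) + dist (c t) (c 1)) := by
          rw [hbound]
          exact ENNReal.ofReal_le_ofReal
            (EuclideanSpace.sqrt_sq_add_sq_le_dist_add_dist_add_dist hd hdst hclosed₀)
      _ = edist (c 0) (c s) + edist (c s) (c t) + edist (c t) (c 1) := by
          simp only [edist_dist, ENNReal.ofReal_add, dist_nonneg, add_nonneg]
      _ ≤ eVariationOn c (Icc 0 1) :=
          eVariationOn.edist_add_edist_add_edist_le c hs.1 hst ht.2
  obtain ⟨t₁, ht₁, hc₁⟩ := htouch₁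
  obtain ⟨t₂, ht₂, hc₂⟩ := htouch₂
  rcases le_total t₁ t₂ with h | h
  · exact key ht₁ ht₂ h (by simp [hc₁, hc₂, abs_of_nonneg hd])
  · exact key ht₂ ht₁ h (by simp [hc₁, hc₂, abs_of_nonneg hd])

/-- The cylinder projection lemma, stated via a continuous lift
`c : [0,1] → ℝ²` of a closed rectifiable loop in the flat cylinder
`[0, R] × S¹_r` (circle of circumference `2πr`): the endpoint condition
`c 1 1 = c 0 1 + l·(2πr)` encodes winding number `l`, the first coordinate
stays in `[0, R]`, and the loop touches both circles `{a} × S¹_r` and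
`{a+d} × S¹_r`.  Its length (total variation, which equals the length of the
loop in the cylinder) is at least `2√(d² + l²π²r²)`. -/
theorem stmt_17 (r R a d : ℝ) (hr : 0 < r) (ha : 0 ≤ a) (hd : 0 ≤ d)
    (hR : a + d ≤ R) (l : ℤ) (c : ℝ → EuclideanSpace ℝ (Fin 2))
    (hcont : ContinuousOn c (Set.Icc 0 1))
    (hclosed₀ : c 1 0 = c 0 0)
    (hwind : c 1 1 = c 0 1 + (l : ℝ) * (2 * π * r))
    (hin : ∀ t ∈ Set.Icc (0 : ℝ) 1, c t 0 ∈ Set.Icc 0 R)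
    (htouch₁ : ∃ t₁ ∈ Set.Icc (0 : ℝ) 1, c t₁ 0 = a)
    (htouch₂ : ∃ t₂ ∈ Set.Icc (0 : ℝ) 1, c t₂ 0 = a + d) :
    ENNReal.ofReal (2 * Real.sqrt (d ^ 2 + (l : ℝ) ^ 2 * π ^ 2 * r ^ 2))
      ≤ eVariationOn c (Set.Icc 0 1) :=
  stmt_17_general r a d hd l c hclosed₀ hwind htouch₁ htouch₂
end
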